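/- arXiv:1209.6365 — 6 statements merged into one kernel-verified Lean document; each statement's English description precedes it below -/
import Mathlib

section
/- Let 𝓗 be a finite collection of affine hyperplanes in ℝⁿ, let Δ(𝓗) be the collection of subsets of 𝓗 with nonempty common intersection, and for intersecting σ define r(σ) = n − dim(∩σ). Then (𝓗, Δ(𝓗), r) is a semimatroid. -/
/-- A semimatroid on ground type `α`: a nonempty downward-closed collection `Δ` of finite
subsets (a simplicial complex) together with a rank function `r` satisfying the five
semimatroid axioms of Ardila. -/
structure IsSemimatroid {α : Type*} [DecidableEq α] (Δ : Finset α → Prop) (r : Finset α → ℕ) :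
    Prop where
  nonempty : ∃ σ, Δ σ
  down_closed : ∀ ⦃σ τ : Finset α⦄, Δ σ → τ ⊆ σ → Δ τ
  rank_le_card : ∀ ⦃σ⦄, Δ σ → r σ ≤ σ.card
  rank_mono : ∀ ⦃σ τ⦄, Δ σ → Δ τ → σ ⊆ τ → r σ ≤ r τ
  submodular : ∀ ⦃σ τ⦄, Δ σ → Δ τ → Δ (σ ∪ τ) → r (σ ∪ τ) + r (σ ∩ τ) ≤ r σ + r τ
  union_mem : ∀ ⦃σ τ⦄, Δ σ → Δ τ → r σ = r (σ ∩ τ) → Δ (σ ∪ τ)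
  exchange : ∀ ⦃σ τ⦄, Δ σ → Δ τ → r σ < r τ → ∃ y ∈ τ \ σ, Δ (insert y σ)

-- A finite family of affine hyperplanes in `ℝⁿ` is given by normal vectors and constants.
variable {n m : ℕ}

/-- A set of hyperplanes is intersecting if there is a common point. -/
def Intersecting (H : Fin m → (Fin n → ℝ) × ℝ) (σ : Finset (Fin m)) : Prop :=
  ∃ x : Fin n → ℝ, ∀ i ∈ σ, ∑ j, (H i).1 j * x j = (H i).2

/-- The direction space of the intersection: vectors orthogonal to all normals of `σ`. -/
noncomputable def directionSpace (H : Fin m → (Fin n → ℝ) × ℝ) (σ : Finset (Fin m)) :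
    Submodule ℝ (Fin n → ℝ) :=
  ⨅ i ∈ σ, LinearMap.ker (∑ j, (H i).1 j • (LinearMap.proj j : (Fin n → ℝ) →ₗ[ℝ] ℝ))

/-- The rank of an intersecting set: the codimension `n − dim(∩σ)` of the intersection. -/
noncomputable def arrRank (H : Fin m → (Fin n → ℝ) × ℝ) (σ : Finset (Fin m)) : ℕ :=
  n - Module.finrank ℝ (directionSpace H σ)

/-!
An intersecting family of hyperplanes is a consistent system of linear equations `fᵢ x = cᵢ`,
and `n − dim(∩σ)` is the dimension of the span of the functionals `fᵢ`, `i ∈ σ`. The rank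
axioms are then those of the linear matroid of the `fᵢ`. The two axioms involving `Δ` follow
from two facts about linear systems: a system stays consistent when we add equations whose
functionals lie in the span of those already present (all solutions agree on that span), and
when we add an equation whose functional is independent of the others (move a solution along a
vector annihilated by the others but not by the new functional).
-/

open Module Submodule

section LinearSystems

variable {K V ι : Type*} [Field K] [AddCommGroup V] [Module K V]
  (f : ι → Dual K V) (c : ι → K)

def IsConsistent (σ : Finset ι) : Prop :=
  ∃ x : V, ∀ i ∈ σ, f i x = c i

noncomputable def equationSpan (σ : Finset ι) : Submodule K (Dual K V) :=
  span K (f '' σ)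

instance (σ : Finset ι) : FiniteDimensional K (equationSpan f σ) :=
  FiniteDimensional.span_of_finite K (σ.finite_toSet.image f)

variable {f c}

theorem equationSpan_mono : Monotone (equationSpan f) :=
  fun _ _ h => span_mono (Set.image_mono (Finset.coe_subset.2 h))

theorem mem_equationSpan_of_mem {σ : Finset ι} {i : ι} (hi : i ∈ σ) : f i ∈ equationSpan f σ :=
  subset_span ⟨i, hi, rfl⟩

theorem dualCoannihilator_equationSpan (σ : Finset ι) :
    (equationSpan f σ).dualCoannihilator = ⨅ i ∈ σ, LinearMap.ker (f i) := by
  ext x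
  rw [← SetLike.mem_coe, equationSpan, coe_dualCoannihilator_span]
  simp

theorem finrank_equationSpan_le_card (σ : Finset ι) : finrank K (equationSpan f σ) ≤ σ.card := by
  rw [equationSpan, Set.image_eq_range]
  exact (finrank_range_le_card _).trans (Fintype.card_coe σ).le

theorem apply_eq_of_mem_equationSpan {σ : Finset ι} {x y : V} (h : ∀ i ∈ σ, f i x = f i y)
    {φ : Dual K V} (hφ : φ ∈ equationSpan f σ) : φ x = φ y := by
  have hle : equationSpan f σ ≤ LinearMap.ker (Dual.eval K V (x - y)) := by
    refine span_le.2 ?_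
    rintro _ ⟨i, hi, rfl⟩
    simp [h i hi]
  simpa [sub_eq_zero] using hle hφ

theorem exists_mem_dualCoannihilator_apply_ne_zero {W : Submodule K (Dual K V)}
    [FiniteDimensional K W] {φ : Dual K V} (hφ : φ ∉ W) :
    ∃ v ∈ W.dualCoannihilator, φ v ≠ 0 := by
  by_contra! h
  exact hφ (Subspace.dualCoannihilator_dualAnnihilator_eq (W := W) ▸
    (mem_dualAnnihilator φ).2 h)

theorem exists_mem_notMem_equationSpan_of_finrank_lt {σ τ : Finset ι}
    (h : finrank K (equationSpan f σ) < finrank K (equationSpan f τ)) :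
    ∃ i ∈ τ, f i ∉ equationSpan f σ := by
  by_contra! hτ
  have hle : equationSpan f τ ≤ equationSpan f σ := by
    refine span_le.2 ?_
    rintro _ ⟨i, hi, rfl⟩
    exact hτ i hi
  exact (finrank_mono hle).not_gt h

variable [DecidableEq ι]

theorem equationSpan_union (σ τ : Finset ι) :
    equationSpan f (σ ∪ τ) = equationSpan f σ ⊔ equationSpan f τ := by
  rw [equationSpan, equationSpan, equationSpan, ← span_union, ← Set.image_union,
    Finset.coe_union]

theorem finrank_equationSpan_union_add_inter_le (σ τ : Finset ι) :
    finrank K (equationSpan f (σ ∪ τ)) + finrank K (equationSpan f (σ ∩ τ)) ≤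
      finrank K (equationSpan f σ) + finrank K (equationSpan f τ) := by
  have hinter : equationSpan f (σ ∩ τ) ≤ equationSpan f σ ⊓ equationSpan f τ :=
    le_inf (equationSpan_mono Finset.inter_subset_left)
      (equationSpan_mono Finset.inter_subset_right)
  rw [equationSpan_union, ← finrank_sup_add_finrank_inf_eq (equationSpan f σ)]
  exact Nat.add_le_add_left (finrank_mono hinter) _

theorem IsConsistent.union_of_equationSpan_le {σ τ : Finset ι} (hσ : IsConsistent f c σ)
    (hτ : IsConsistent f c τ) (hspan : equationSpan f σ ≤ equationSpan f (σ ∩ τ)) :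
    IsConsistent f c (σ ∪ τ) := by
  obtain ⟨x, hx⟩ := hσ
  obtain ⟨y, hy⟩ := hτ
  have hxy : ∀ i ∈ σ ∩ τ, f i x = f i y := fun i hi => by
    rw [hx i (Finset.mem_inter.1 hi).1, hy i (Finset.mem_inter.1 hi).2]
  refine ⟨y, fun i hi => ?_⟩
  rcases Finset.mem_union.1 hi with hiσ | hiτ
  · rw [← apply_eq_of_mem_equationSpan hxy (hspan (mem_equationSpan_of_mem hiσ)), hx i hiσ]
  · exact hy i hiτ

theorem IsConsistent.insert_of_notMem_equationSpan {σ : Finset ι} {i : ι}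
    (hσ : IsConsistent f c σ) (hi : f i ∉ equationSpan f σ) :
    IsConsistent f c (insert i σ) := by
  obtain ⟨x, hx⟩ := hσ
  obtain ⟨v, hv, hiv⟩ := exists_mem_dualCoannihilator_apply_ne_zero hi
  refine ⟨x + ((c i - f i x) / f i v) • v, fun j hj => ?_⟩
  rcases Finset.mem_insert.1 hj with rfl | hjσ
  · rw [map_add, map_smul, smul_eq_mul, div_mul_cancel₀ _ hiv, add_sub_cancel]
  · have hjv : f j v = 0 := (mem_dualCoannihilator v).1 hv _ (mem_equationSpan_of_mem hjσ)
    rw [map_add, map_smul, hjv, smul_zero, add_zero, hx j hjσ]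

theorem isSemimatroid_isConsistent :
    IsSemimatroid (IsConsistent f c) (fun σ => finrank K (equationSpan f σ)) where
  nonempty := ⟨∅, 0, by simp⟩
  down_closed := fun _ _ ⟨x, hx⟩ h => ⟨x, fun i hi => hx i (h hi)⟩
  rank_le_card := fun σ _ => finrank_equationSpan_le_card σ
  rank_mono := fun _ _ _ _ h => finrank_mono (equationSpan_mono h)
  submodular := fun σ τ _ _ _ => finrank_equationSpan_union_add_inter_le σ τ
  union_mem := fun _ _ hσ hτ hrank => hσ.union_of_equationSpan_le hτ
    (eq_of_le_of_finrank_eq (equationSpan_mono Finset.inter_subset_left) hrank.symm).ge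
  exchange := fun σ _ hσ _ hrank => by
    obtain ⟨i, hiτ, hi⟩ := exists_mem_notMem_equationSpan_of_finrank_lt hrank
    exact ⟨i, Finset.mem_sdiff.2 ⟨hiτ, fun hiσ => hi (mem_equationSpan_of_mem hiσ)⟩,
      hσ.insert_of_notMem_equationSpan hi⟩

end LinearSystems

noncomputable def hyperplaneFunctional (H : Fin m → (Fin n → ℝ) × ℝ) (i : Fin m) :
    Dual ℝ (Fin n → ℝ) :=
  ∑ j, (H i).1 j • (LinearMap.proj j : (Fin n → ℝ) →ₗ[ℝ] ℝ)

theorem hyperplaneFunctional_apply (H : Fin m → (Fin n → ℝ) × ℝ) (i : Fin m) (x : Fin n → ℝ) :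
    hyperplaneFunctional H i x = ∑ j, (H i).1 j * x j := by
  simp [hyperplaneFunctional]

theorem intersecting_eq_isConsistent (H : Fin m → (Fin n → ℝ) × ℝ) :
    Intersecting H = IsConsistent (hyperplaneFunctional H) (fun i => (H i).2) := by
  ext σ
  simp only [Intersecting, IsConsistent, hyperplaneFunctional_apply]

theorem arrRank_eq_finrank_equationSpan (H : Fin m → (Fin n → ℝ) × ℝ) (σ : Finset (Fin m)) :
    arrRank H σ = finrank ℝ (equationSpan (hyperplaneFunctional H) σ) := by
  have hdim := Subspace.finrank_add_finrank_dualCoannihilator_eq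
    (equationSpan (hyperplaneFunctional H) σ)
  rw [finrank_fin_fun, dualCoannihilator_equationSpan] at hdim
  rw [arrRank, directionSpace]
  exact Nat.sub_eq_of_eq_add hdim.symm

theorem hyperplane_arrangement_semimatroid_general (H : Fin m → (Fin n → ℝ) × ℝ) :
    IsSemimatroid (Intersecting H) (arrRank H) := by
  rw [intersecting_eq_isConsistent, funext (arrRank_eq_finrank_equationSpan H)]
  exact isSemimatroid_isConsistent

/-- For a finite collection `𝓗` of affine hyperplanes in `ℝⁿ`, the intersecting
subsets `Δ(𝓗)` together with the codimension rank `r(σ) = n − dim(∩σ)` form a semimatroid. -/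
theorem hyperplane_arrangement_semimatroid (H : Fin m → (Fin n → ℝ) × ℝ)
    (hH : ∀ i, (H i).1 ≠ 0) :
    IsSemimatroid (Intersecting H) (arrRank H) :=
  hyperplane_arrangement_semimatroid_general H
end

section
/- In a semimatroid (S, Δ, r), if e ∈ S with {e} ∈ Δ and e is not a loop, then the contraction 𝒞/e = (S \ {e}, lk_e(Δ), r') with r'(σ) = r(σ ∪ {e}) − r({e}) is again a semimatroid. -/
namespace IsSemimatroid

variable {α : Type*} [DecidableEq α] {Δ : Finset α → Prop} {r : Finset α → ℕ} {e : α}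
  {σ τ : Finset α}

/-- The link `lk_e(Δ)`. -/
def link (Δ : Finset α → Prop) (e : α) : Finset α → Prop :=
  fun τ => e ∉ τ ∧ Δ (insert e τ)

/-- The rank function `r'` of the contraction `𝒞/e`. -/
def contractRank (r : Finset α → ℕ) (e : α) : Finset α → ℕ :=
  fun σ => r (insert e σ) - r {e}

theorem link_of_subset (h : IsSemimatroid Δ r) (hσ : link Δ e σ) (hτσ : τ ⊆ σ) :
    link Δ e τ :=
  ⟨fun heτ => hσ.1 (hτσ heτ), h.down_closed hσ.2 (Finset.insert_subset_insert e hτσ)⟩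

theorem link_inter (h : IsSemimatroid Δ r) (hσ : link Δ e σ) : link Δ e (σ ∩ τ) :=
  h.link_of_subset hσ Finset.inter_subset_left

/-- On the link, the truncated subtraction in `contractRank` is exact. -/
theorem contractRank_add_rank_singleton (h : IsSemimatroid Δ r) (he : Δ {e})
    (hσ : link Δ e σ) : contractRank r e σ + r {e} = r (insert e σ) := by
  have := h.rank_mono he hσ.2 (Finset.singleton_subset_iff.2 (Finset.mem_insert_self e σ))
  unfold contractRank
  omega

theorem rank_singleton_eq_one (h : IsSemimatroid Δ r) (he : Δ {e}) (hloop : r {e} ≠ 0) :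
    r {e} = 1 := by
  have := h.rank_le_card he
  rw [Finset.card_singleton] at this
  omega

theorem contractRank_le_card (h : IsSemimatroid Δ r) (he : Δ {e}) (hloop : r {e} ≠ 0)
    (hσ : link Δ e σ) : contractRank r e σ ≤ σ.card := by
  have hcard := h.rank_le_card hσ.2
  rw [Finset.card_insert_of_notMem hσ.1] at hcard
  have := h.contractRank_add_rank_singleton he hσ
  have := h.rank_singleton_eq_one he hloop
  omega

theorem contractRank_submodular (h : IsSemimatroid Δ r) (he : Δ {e}) (hσ : link Δ e σ)
    (hτ : link Δ e τ) (hστ : link Δ e (σ ∪ τ)) :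
    contractRank r e (σ ∪ τ) + contractRank r e (σ ∩ τ) ≤
      contractRank r e σ + contractRank r e τ := by
  have hsub := h.submodular hσ.2 hτ.2 (Finset.insert_union_distrib e σ τ ▸ hστ.2)
  rw [← Finset.insert_union_distrib, ← Finset.insert_inter_distrib] at hsub
  have := h.contractRank_add_rank_singleton he hσ
  have := h.contractRank_add_rank_singleton he hτ
  have := h.contractRank_add_rank_singleton he hστ
  have := h.contractRank_add_rank_singleton he (h.link_inter (τ := τ) hσ)
  omega

theorem link_union (h : IsSemimatroid Δ r) (he : Δ {e}) (hσ : link Δ e σ) (hτ : link Δ e τ)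
    (hrank : contractRank r e σ = contractRank r e (σ ∩ τ)) : link Δ e (σ ∪ τ) := by
  have hσ' := h.contractRank_add_rank_singleton he hσ
  have hστ' := h.contractRank_add_rank_singleton he (h.link_inter (τ := τ) hσ)
  have hrank' : r (insert e σ) = r (insert e σ ∩ insert e τ) := by
    rw [← Finset.insert_inter_distrib]
    omega
  refine ⟨by simp [hσ.1, hτ.1], ?_⟩
  rw [Finset.insert_union_distrib]
  exact h.union_mem hσ.2 hτ.2 hrank'

theorem link_exchange (h : IsSemimatroid Δ r) (he : Δ {e}) (hσ : link Δ e σ)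
    (hτ : link Δ e τ) (hlt : contractRank r e σ < contractRank r e τ) :
    ∃ y ∈ τ \ σ, link Δ e (insert y σ) := by
  have := h.contractRank_add_rank_singleton he hσ
  have := h.contractRank_add_rank_singleton he hτ
  obtain ⟨y, hy, hyσ⟩ := h.exchange hσ.2 hτ.2 (by omega)
  simp only [Finset.mem_sdiff, Finset.mem_insert, not_or] at hy
  obtain ⟨hyτ, hye, hyσ'⟩ := hy
  refine ⟨y, Finset.mem_sdiff.2 ⟨hyτ.resolve_left hye, hyσ'⟩, ?_, ?_⟩
  · simp [Ne.symm hye, hσ.1]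
  · rwa [Finset.insert_comm]

theorem contract (h : IsSemimatroid Δ r) (he : Δ {e}) (hloop : r {e} ≠ 0) :
    IsSemimatroid (link Δ e) (contractRank r e) where
  nonempty := ⟨∅, Finset.notMem_empty e, by simpa using he⟩
  down_closed _ _ hσ hτσ := h.link_of_subset hσ hτσ
  rank_le_card _ hσ := h.contractRank_le_card he hloop hσ
  rank_mono _ _ hσ hτ hστ := by
    have := h.rank_mono hσ.2 hτ.2 (Finset.insert_subset_insert e hστ)
    have := h.contractRank_add_rank_singleton he hσ
    have := h.contractRank_add_rank_singleton he hτ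
    omega
  submodular _ _ hσ hτ hστ := h.contractRank_submodular he hσ hτ hστ
  union_mem _ _ hσ hτ hrank := h.link_union he hσ hτ hrank
  exchange _ _ hσ hτ hlt := h.link_exchange he hσ hτ hlt

end IsSemimatroid

/-- If `{e} ∈ Δ` and `e` is not a loop (`r {e} ≠ 0`), then the contraction
`𝒞/e = (S \ {e}, lk_e(Δ), r')` with `r'(σ) = r(σ ∪ {e}) − r({e})` is again a semimatroid.
The link `lk_e(Δ)` consists of the faces `τ` with `e ∉ τ` and `τ ∪ {e} ∈ Δ`. -/
theorem contraction_is_semimatroid {α : Type*} [DecidableEq α]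
    (Δ : Finset α → Prop) (r : Finset α → ℕ) (h : IsSemimatroid Δ r)
    (e : α) (he : Δ {e}) (hloop : r {e} ≠ 0) :
    IsSemimatroid (fun τ : Finset α => e ∉ τ ∧ Δ (insert e τ))
      (fun σ : Finset α => r (insert e σ) - r {e}) :=
  h.contract he hloop
end

section
/- The Tutte polynomial of a semimatroid satisfies deletion-contraction: if e ∈ S is neither a loop nor a coloop and {e} ∈ Δ, then T_𝒞(x,y) = T_{𝒞−e}(x,y) + T_{𝒞/e}(x,y). -/
/-- The faces of the complex (a finite downward-closed family) of the deletion at `e`. -/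
def delC {α : Type*} [DecidableEq α] (Δ : Finset (Finset α)) (e : α) : Finset (Finset α) :=
  Δ.filter (fun τ => e ∉ τ)

/-- The faces of the link (contraction complex) at `e`. -/
def lkC {α : Type*} [DecidableEq α] (Δ : Finset (Finset α)) (e : α) : Finset (Finset α) :=
  (Δ.filter (fun τ => e ∈ τ)).image (fun τ => τ.erase e)

/-- The rank of a semimatroid: the maximum rank of a face (the common size of the bases). -/
def rkOf {α : Type*} (Δ : Finset (Finset α)) (r : Finset α → ℕ) : ℕ := Δ.sup r

/-- The Tutte polynomial of a semimatroid, evaluated at real numbers `x, y`: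
`T(x,y) = Σ_{σ ∈ Δ} (x−1)^{r_𝒞 − r(σ)} (y−1)^{|σ| − r(σ)}`. -/
noncomputable def tutte {α : Type*} (Δ : Finset (Finset α)) (r : Finset α → ℕ)
    (x y : ℝ) : ℝ :=
  ∑ σ ∈ Δ, (x - 1) ^ (rkOf Δ r - r σ) * (y - 1) ^ (σ.card - r σ)

/-- `B` is a basis: an independent face maximal among independent faces. -/
def IsSMBasis {α : Type*} (Δ : Finset (Finset α)) (r : Finset α → ℕ) (B : Finset α) : Prop :=
  B ∈ Δ ∧ r B = B.card ∧ ∀ X ∈ Δ, r X = X.card → B ⊆ X → X = B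

/-! Split the sum over `Δ` according to whether a face contains `e`: the faces avoiding `e`
give the deletion sum, and `σ ↦ σ \ {e}` matches the faces containing `e` with the link. The
exponents agree because `r {e} = 1` and the ranks behave as expected: a basis avoiding `e` has
full rank, so deleting `e` keeps the rank, while some face of full rank contains `e`, so
contracting `e` lowers the rank by one. -/

namespace IsSemimatroid

variable {α : Type*} [DecidableEq α]

section Complex

variable {Δ : Finset α → Prop} {r : Finset α → ℕ}

/-- Submodularity applied to `σ ∪ A` and `insert a σ`, whose intersection contains `σ`. -/
theorem rank_union_eq_of_forall_rank_insert_eq (h : IsSemimatroid Δ r) {σ A : Finset α}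
    (hU : Δ (σ ∪ A)) (hA : ∀ a ∈ A, r (insert a σ) = r σ) : r (σ ∪ A) = r σ := by
  induction A using Finset.induction_on with
  | empty => simp
  | @insert a A _ ih =>
    have hUa : σ ∪ A ∪ insert a σ = σ ∪ insert a A := by
      ext z; simp only [Finset.mem_union, Finset.mem_insert]; tauto
    have hσ : Δ σ := h.down_closed hU Finset.subset_union_left
    have hX : Δ (σ ∪ A) :=
      h.down_closed hU (Finset.union_subset_union_right (Finset.subset_insert a A))
    have hY : Δ (insert a σ) :=
      h.down_closed hU (Finset.insert_subset (by simp) Finset.subset_union_left)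
    have hσ_sub : σ ⊆ (σ ∪ A) ∩ insert a σ :=
      Finset.subset_inter Finset.subset_union_left (Finset.subset_insert a σ)
    have hsubm := h.submodular hX hY (hUa ▸ hU)
    have hinter := h.rank_mono hσ (h.down_closed hX Finset.inter_subset_left) hσ_sub
    have hmono := h.rank_mono hσ hU Finset.subset_union_left
    rw [hUa, ih hX fun b hb => hA b (Finset.mem_insert_of_mem hb),
      hA a (Finset.mem_insert_self a A)] at hsubm
    omega

theorem exists_rank_lt_rank_insert (h : IsSemimatroid Δ r) {σ τ : Finset α} (hτ : Δ τ)
    (hστ : σ ⊆ τ) (hlt : r σ < r τ) : ∃ a ∈ τ \ σ, r σ < r (insert a σ) := by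
  by_contra! hle
  have hσ : Δ σ := h.down_closed hτ hστ
  have hunion : σ ∪ (τ \ σ) = τ := Finset.union_sdiff_of_subset hστ
  have := h.rank_union_eq_of_forall_rank_insert_eq (hunion.symm ▸ hτ) fun a ha =>
    (hle a ha).antisymm <| h.rank_mono hσ
      (h.down_closed hτ (Finset.insert_subset (Finset.mem_sdiff.1 ha).1 hστ))
      (Finset.subset_insert a σ)
  rw [hunion] at this
  omega

end Complex

variable {Δ : Finset (Finset α)} {r : Finset α → ℕ}

theorem rank_eq_rkOf_of_maximal (h : IsSemimatroid (· ∈ Δ) r) {σ : Finset α}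
    (hσ : Maximal (· ∈ Δ) σ) : r σ = rkOf Δ r := by
  refine le_antisymm (Finset.le_sup hσ.1) ?_
  obtain ⟨τ, hτ, hτ_sup⟩ := Finset.exists_mem_eq_sup Δ ⟨σ, hσ.1⟩ r
  rw [rkOf, hτ_sup]
  by_contra! hlt
  obtain ⟨y, hy, hyσ⟩ := h.exchange hσ.1 hτ hlt
  exact (Finset.mem_sdiff.1 hy).2
    (hσ.2 hyσ (Finset.subset_insert y σ) (Finset.mem_insert_self y σ))

theorem exists_superset_rank_eq_rkOf (h : IsSemimatroid (· ∈ Δ) r) {σ : Finset α}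
    (hσ : σ ∈ Δ) : ∃ τ ∈ Δ, σ ⊆ τ ∧ r τ = rkOf Δ r := by
  obtain ⟨τ, hστ, hτ⟩ := Δ.exists_le_maximal hσ
  exact ⟨τ, hτ.1, hστ, h.rank_eq_rkOf_of_maximal hτ⟩

/-- A basis of smaller rank would be augmented, inside a face of full rank containing it, by an
element raising its rank, i.e. to a larger independent face. -/
theorem rank_eq_rkOf_of_isSMBasis (h : IsSemimatroid (· ∈ Δ) r) {B : Finset α}
    (hB : IsSMBasis Δ r B) : r B = rkOf Δ r := by
  obtain ⟨hBΔ, hB_indep, hB_max⟩ := hB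
  obtain ⟨τ, hτ, hBτ, hτ_rk⟩ := h.exists_superset_rank_eq_rkOf hBΔ
  refine le_antisymm (Finset.le_sup hBΔ) ?_
  by_contra! hlt
  obtain ⟨a, ha, hlt_a⟩ := h.exists_rank_lt_rank_insert hτ hBτ (hτ_rk ▸ hlt)
  obtain ⟨haτ, haB⟩ := Finset.mem_sdiff.1 ha
  have haΔ : insert a B ∈ Δ := h.down_closed hτ (Finset.insert_subset haτ hBτ)
  have hcard := h.rank_le_card haΔ
  rw [Finset.card_insert_of_notMem haB] at hcard
  have heq := hB_max _ haΔ (by rw [Finset.card_insert_of_notMem haB]; omega)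
    (Finset.subset_insert a B)
  exact haB (heq ▸ Finset.mem_insert_self a B)

theorem rkOf_delC (h : IsSemimatroid (· ∈ Δ) r) {B : Finset α} (hB : IsSMBasis Δ r B)
    {e : α} (heB : e ∉ B) : rkOf (delC Δ e) r = rkOf Δ r :=
  le_antisymm (Finset.sup_mono (Finset.filter_subset _ _)) <|
    h.rank_eq_rkOf_of_isSMBasis hB ▸ Finset.le_sup (Finset.mem_filter.2 ⟨hB.1, heB⟩)

theorem rkOf_lkC (h : IsSemimatroid (· ∈ Δ) r) {e : α} (he : {e} ∈ Δ) :
    rkOf (lkC Δ e) (fun σ => r (insert e σ) - r {e}) = rkOf Δ r - r {e} := by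
  apply le_antisymm
  · refine Finset.sup_le fun τ hτ => ?_
    obtain ⟨σ, hσ, rfl⟩ := Finset.mem_image.1 hτ
    obtain ⟨hσΔ, heσ⟩ := Finset.mem_filter.1 hσ
    simp only [Finset.insert_erase heσ]
    exact Nat.sub_le_sub_right (Finset.le_sup hσΔ) _
  · obtain ⟨σ, hσ, he_sub, hσ_rk⟩ := h.exists_superset_rank_eq_rkOf he
    have heσ : e ∈ σ := Finset.singleton_subset_iff.1 he_sub
    have hmem : σ.erase e ∈ lkC Δ e :=
      Finset.mem_image.2 ⟨σ, Finset.mem_filter.2 ⟨hσ, heσ⟩, rfl⟩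
    refine le_of_eq_of_le ?_ (Finset.le_sup (f := fun σ => r (insert e σ) - r {e}) hmem)
    simp only [Finset.insert_erase heσ, hσ_rk]

end IsSemimatroid

theorem sum_lkC {α M : Type*} [DecidableEq α] [AddCommMonoid M] (Δ : Finset (Finset α))
    (e : α) (f : Finset α → M) : ∑ τ ∈ lkC Δ e, f τ = ∑ σ ∈ Δ with e ∈ σ, f (σ.erase e) :=
  Finset.sum_image fun _ hσ _ hτ => Finset.erase_injOn' e (Finset.mem_filter.1 hσ).2
    (Finset.mem_filter.1 hτ).2

/-- deletion-contraction for the Tutte polynomial of a semimatroid: if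
`{e} ∈ Δ` and `e` is neither a loop (`r {e} ≠ 0`) nor a coloop (some basis avoids `e`),
then `T_𝒞 = T_{𝒞−e} + T_{𝒞/e}`, where the contraction has rank `r'(σ) = r(σ∪{e}) − r({e})`. -/
theorem tutte_deletion_contraction {α : Type*} [DecidableEq α]
    (Δ : Finset (Finset α)) (r : Finset α → ℕ)
    (h : IsSemimatroid (· ∈ Δ) r)
    (e : α) (he : ({e} : Finset α) ∈ Δ)
    (hnotloop : r {e} ≠ 0)
    (hnotcoloop : ∃ B, IsSMBasis Δ r B ∧ e ∉ B) :
    ∀ x y : ℝ,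
      tutte Δ r x y =
        tutte (delC Δ e) r x y +
        tutte (lkC Δ e) (fun σ => r (insert e σ) - r {e}) x y := by
  intro x y
  obtain ⟨B, hB, heB⟩ := hnotcoloop
  have hre : r {e} = 1 := by
    have := h.rank_le_card he
    rw [Finset.card_singleton] at this
    omega
  unfold tutte
  rw [h.rkOf_delC hB heB, h.rkOf_lkC he, sum_lkC, delC,
    ← Finset.sum_filter_not_add_sum_filter Δ (e ∈ ·)]
  congr 1
  refine Finset.sum_congr rfl fun σ hσ => ?_
  obtain ⟨hσΔ, heσ⟩ := Finset.mem_filter.1 hσ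
  have hσ_rk : 1 ≤ r σ := hre ▸ h.rank_mono he hσΔ (Finset.singleton_subset_iff.2 heσ)
  simp only [Finset.insert_erase heσ, Finset.card_erase_of_mem heσ, hre]
  congr 2 <;> omega
end

section
/- If e is a loop of a semimatroid 𝒞, then T_𝒞(x,y) = y · T_{𝒞−e}(x,y). -/
/-!
Adding a loop `e` to a face changes neither membership in `Δ` nor the rank, so the faces
containing `e` are exactly the sets `insert e σ` with `σ` a face of the deletion, and
`insert e σ` has the same rank as `σ` and one more element. Hence it contributes `(y - 1)`
times the term of `σ`, and the two halves of the sum add up to `y · T_{𝒞−e}`; the rank of the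
semimatroid does not change either, since `r σ = r (σ.erase e)`.
-/

namespace IsSemimatroid

variable {α : Type*} [DecidableEq α] {Δ : Finset α → Prop} {r : Finset α → ℕ} {e : α}

theorem empty_mem (h : IsSemimatroid Δ r) : Δ ∅ :=
  let ⟨_, hσ⟩ := h.nonempty
  h.down_closed hσ (Finset.empty_subset _)

theorem rank_empty (h : IsSemimatroid Δ r) : r ∅ = 0 :=
  Nat.le_zero.mp (h.rank_le_card h.empty_mem)

theorem rank_singleton_inter_of_loop (h : IsSemimatroid Δ r) (hloop : r {e} = 0)
    (τ : Finset α) : r ({e} ∩ τ) = 0 := by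
  by_cases heτ : e ∈ τ
  · rwa [Finset.singleton_inter_of_mem heτ]
  · rw [Finset.singleton_inter_of_notMem heτ, h.rank_empty]

theorem insert_mem_of_loop (h : IsSemimatroid Δ r) (he : Δ {e}) (hloop : r {e} = 0)
    {τ : Finset α} (hτ : Δ τ) : Δ (insert e τ) := by
  rw [Finset.insert_eq]
  exact h.union_mem he hτ (by rw [hloop, h.rank_singleton_inter_of_loop hloop])

theorem rank_insert_of_loop (h : IsSemimatroid Δ r) (he : Δ {e}) (hloop : r {e} = 0)
    {τ : Finset α} (hτ : Δ τ) : r (insert e τ) = r τ := by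
  have hins := h.insert_mem_of_loop he hloop hτ
  have hle := h.submodular he hτ (by rwa [← Finset.insert_eq])
  rw [← Finset.insert_eq, hloop] at hle
  have hge := h.rank_mono hτ hins (Finset.subset_insert e τ)
  omega

theorem rank_erase_of_loop (h : IsSemimatroid Δ r) (he : Δ {e}) (hloop : r {e} = 0)
    {σ : Finset α} (hσ : Δ σ) : r (σ.erase e) = r σ := by
  by_cases heσ : e ∈ σ
  · have hτ := h.down_closed hσ (Finset.erase_subset e σ)
    rw [← h.rank_insert_of_loop he hloop hτ, Finset.insert_erase heσ]
  · rw [Finset.erase_eq_of_notMem heσ]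

end IsSemimatroid

section FiniteComplex

variable {α : Type*} [DecidableEq α] {Δ : Finset (Finset α)} {r : Finset α → ℕ} {e : α}

theorem rkOf_delC_of_loop (h : IsSemimatroid (· ∈ Δ) r) (he : {e} ∈ Δ) (hloop : r {e} = 0) :
    rkOf (delC Δ e) r = rkOf Δ r := by
  refine le_antisymm (Finset.sup_mono (Finset.filter_subset _ _)) (Finset.sup_le fun σ hσ => ?_)
  rw [← h.rank_erase_of_loop he hloop hσ]
  refine Finset.le_sup (Finset.mem_filter.mpr ⟨?_, Finset.notMem_erase e σ⟩)
  exact h.down_closed hσ (Finset.erase_subset e σ)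

theorem filter_mem_eq_image_insert_delC (h : IsSemimatroid (· ∈ Δ) r) (he : {e} ∈ Δ)
    (hloop : r {e} = 0) : Δ.filter (e ∈ ·) = (delC Δ e).image (insert e) := by
  ext σ
  simp only [Finset.mem_filter, Finset.mem_image, delC]
  constructor
  · rintro ⟨hσ, heσ⟩
    exact ⟨σ.erase e, ⟨h.down_closed hσ (Finset.erase_subset e σ), Finset.notMem_erase e σ⟩,
      Finset.insert_erase heσ⟩
  · rintro ⟨τ, ⟨hτ, -⟩, rfl⟩
    exact ⟨h.insert_mem_of_loop he hloop hτ, Finset.mem_insert_self e τ⟩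

theorem sum_eq_sum_delC_add_sum_insert_of_loop {M : Type*} [AddCommMonoid M]
    (h : IsSemimatroid (· ∈ Δ) r) (he : {e} ∈ Δ) (hloop : r {e} = 0) (f : Finset α → M) :
    ∑ σ ∈ Δ, f σ = ∑ σ ∈ delC Δ e, f σ + ∑ σ ∈ delC Δ e, f (insert e σ) := by
  have hinj : Set.InjOn (insert e) (delC Δ e : Set (Finset α)) := fun σ hσ τ hτ hστ => by
    simp only [delC, Finset.coe_filter, Set.mem_ofPred_eq] at hσ hτ
    rw [← Finset.erase_insert hσ.2, ← Finset.erase_insert hτ.2, hστ]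
  rw [← Finset.sum_filter_not_add_sum_filter Δ (e ∈ ·),
    filter_mem_eq_image_insert_delC h he hloop, Finset.sum_image hinj]
  rfl

end FiniteComplex

/-- if `e` is a loop of a semimatroid (`{e} ∈ Δ` and `r {e} = 0`), then
`T_𝒞(x,y) = y · T_{𝒞−e}(x,y)`. -/
theorem tutte_loop {α : Type*} [DecidableEq α]
    (Δ : Finset (Finset α)) (r : Finset α → ℕ)
    (h : IsSemimatroid (· ∈ Δ) r)
    (e : α) (he : ({e} : Finset α) ∈ Δ) (hloop : r {e} = 0) :
    ∀ x y : ℝ, tutte Δ r x y = y * tutte (delC Δ e) r x y := by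
  intro x y
  set f : Finset α → ℝ := fun σ => (x - 1) ^ (rkOf Δ r - r σ) * (y - 1) ^ (σ.card - r σ)
  have hinsert : ∀ σ ∈ delC Δ e, f (insert e σ) = (y - 1) * f σ := by
    intro σ hσ
    obtain ⟨hσΔ, heσ⟩ := Finset.mem_filter.mp hσ
    have hcard : σ.card + 1 - r σ = σ.card - r σ + 1 := by
      have := h.rank_le_card hσΔ
      omega
    simp only [f, h.rank_insert_of_loop he hloop hσΔ, Finset.card_insert_of_notMem heσ, hcard,
      pow_succ]
    ring
  calc tutte Δ r x y = ∑ σ ∈ delC Δ e, f σ + ∑ σ ∈ delC Δ e, f (insert e σ) :=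
        sum_eq_sum_delC_add_sum_insert_of_loop h he hloop f
    _ = y * ∑ σ ∈ delC Δ e, f σ := by
        rw [Finset.sum_congr rfl hinsert, ← Finset.mul_sum]
        ring
    _ = y * tutte (delC Δ e) r x y := by
        rw [tutte, rkOf_delC_of_loop h he hloop]
end

section
/- Let Δ be a strong pseudo-independence complex over a matroid M with rank function r on ground set S. Then (S, Δ, r restricted to Δ) is a semimatroid. -/
/-!
Pseudo-independence gives the exchange axiom: if no element of `τ \ σ` extends the face `σ`,
then every such element lies in the closure of `σ`, and by submodularity so does all of `τ`,
forcing `r τ ≤ r σ`. Strongness gives the union axiom: if `r σ = r (σ ∩ τ)`, each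
`x ∈ σ \ τ` is a rank-preserving extension of the face `σ ∩ τ`, hence a cone point of its
link, and the elements of `σ \ τ` can be added to `τ` one at a time.
-/

namespace Semimatroid

variable {α : Type*} [DecidableEq α] (Δ : Finset α → Prop) (r : Finset α → ℕ)

def IsPseudoIndependence : Prop :=
  ∀ ⦃σ : Finset α⦄ ⦃x : α⦄, Δ σ → x ∉ σ → r σ < r (insert x σ) → Δ (insert x σ)

/-- The link `lk_σ(Δ)` is encoded by the faces `τ ∪ σ` of `Δ` with `τ` disjoint from `σ`. -/
def IsStrong : Prop :=
  ∀ ⦃σ : Finset α⦄ ⦃x : α⦄, Δ σ → x ∉ σ → r (insert x σ) = r σ →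
    Δ (insert x σ) →
    ∀ τ : Finset α, τ ∩ σ = ∅ → Δ (τ ∪ σ) → x ∉ τ → Δ (insert x τ ∪ σ)

variable {Δ r}

theorem rank_union_le_of_forall_rank_insert_le
    (h_mono : ∀ ⦃σ τ : Finset α⦄, σ ⊆ τ → r σ ≤ r τ)
    (h_submod : ∀ σ τ : Finset α, r (σ ∪ τ) + r (σ ∩ τ) ≤ r σ + r τ)
    (σ T : Finset α) (hT : ∀ y ∈ T, r (insert y σ) ≤ r σ) : r (σ ∪ T) ≤ r σ := by
  induction T using Finset.induction_on with
  | empty => simp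
  | @insert a T _ ih =>
    have ih := ih fun y hy => hT y (Finset.mem_insert_of_mem hy)
    have ha := hT a (Finset.mem_insert_self a T)
    have hsub := h_submod (σ ∪ T) (insert a σ)
    have hunion : σ ∪ T ∪ insert a σ = σ ∪ insert a T := by
      ext z; simp only [Finset.mem_union, Finset.mem_insert]; tauto
    have hinter : r σ ≤ r ((σ ∪ T) ∩ insert a σ) := h_mono <|
      Finset.subset_inter Finset.subset_union_left (Finset.subset_insert a σ)
    rw [hunion] at hsub
    omega

theorem IsPseudoIndependence.exists_insert_mem
    (hPI : IsPseudoIndependence Δ r)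
    (h_mono : ∀ ⦃σ τ : Finset α⦄, σ ⊆ τ → r σ ≤ r τ)
    (h_submod : ∀ σ τ : Finset α, r (σ ∪ τ) + r (σ ∩ τ) ≤ r σ + r τ)
    {σ τ : Finset α} (hσ : Δ σ) (hlt : r σ < r τ) : ∃ y ∈ τ \ σ, Δ (insert y σ) := by
  by_contra! hcon
  have hclosed : ∀ y ∈ τ \ σ, r (insert y σ) ≤ r σ := fun y hy =>
    not_lt.mp fun hy_lt => hcon y hy (hPI hσ (Finset.mem_sdiff.mp hy).2 hy_lt)
  have hle := rank_union_le_of_forall_rank_insert_le h_mono h_submod σ (τ \ σ) hclosed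
  rw [Finset.union_sdiff_self_eq_union] at hle
  have := h_mono (Finset.subset_union_right : τ ⊆ σ ∪ τ)
  omega

theorem IsStrong.insert_mem (hStrong : IsStrong Δ r)
    {B F : Finset α} {x : α} (hB : Δ B) (hxB : x ∉ B) (hrx : r (insert x B) = r B)
    (hxB_mem : Δ (insert x B)) (hBF : B ⊆ F) (hF : Δ F) (hxF : x ∉ F) :
    Δ (insert x F) := by
  have hF_eq : F \ B ∪ B = F := Finset.sdiff_union_of_subset hBF
  have := hStrong hB hxB hrx hxB_mem (F \ B) (Finset.sdiff_inter_self B F) (by rwa [hF_eq])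
    fun hx => hxF (Finset.mem_sdiff.mp hx).1
  rwa [Finset.insert_union, hF_eq] at this

theorem IsStrong.union_mem (hStrong : IsStrong Δ r)
    (hdown : ∀ ⦃σ τ : Finset α⦄, Δ σ → τ ⊆ σ → Δ τ)
    (h_mono : ∀ ⦃σ τ : Finset α⦄, σ ⊆ τ → r σ ≤ r τ)
    {σ τ : Finset α} (hσ : Δ σ) (hτ : Δ τ) (hr : r σ = r (σ ∩ τ)) : Δ (σ ∪ τ) := by
  rw [← Finset.sdiff_union_self_eq_union]
  refine Finset.induction_on' (motive := fun U => Δ (U ∪ τ)) (σ \ τ) (by simpa using hτ) ?_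
  intro x U hx _ hxU ih
  obtain ⟨hxσ, hxτ⟩ := Finset.mem_sdiff.mp hx
  have hxB : insert x (σ ∩ τ) ⊆ σ := Finset.insert_subset hxσ Finset.inter_subset_left
  have hrx : r (insert x (σ ∩ τ)) = r (σ ∩ τ) :=
    le_antisymm (hr ▸ h_mono hxB) (h_mono (Finset.subset_insert x _))
  rw [Finset.insert_union]
  exact hStrong.insert_mem (hdown hσ Finset.inter_subset_left)
    (fun h => hxτ (Finset.mem_inter.mp h).2) hrx (hdown hσ hxB)
    (Finset.inter_subset_right.trans Finset.subset_union_right) ih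
    (by simp [hxU, hxτ])

end Semimatroid

theorem strong_pseudo_independence_is_semimatroid_general {α : Type*} [DecidableEq α]
    (Δ : Finset α → Prop) (r : Finset α → ℕ)
    -- `Δ` is a nonempty simplicial complex
    (hΔ : Δ ∅)
    (hdown : ∀ ⦃σ τ : Finset α⦄, Δ σ → τ ⊆ σ → Δ τ)
    -- `r` is the rank function of a matroid
    (h_le_card : ∀ σ : Finset α, r σ ≤ σ.card)
    (h_mono : ∀ ⦃σ τ : Finset α⦄, σ ⊆ τ → r σ ≤ r τ)
    (h_submod : ∀ σ τ : Finset α, r (σ ∪ τ) + r (σ ∩ τ) ≤ r σ + r τ)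
    -- `Δ` is a pseudo-independence complex over the matroid
    (hPI : ∀ ⦃σ : Finset α⦄ ⦃x : α⦄, Δ σ → x ∉ σ → r σ < r (insert x σ) → Δ (insert x σ))
    -- `Δ` is strong: such an `x` is a cone point of `lk_σ(Δ)`
    (hStrong : ∀ ⦃σ : Finset α⦄ ⦃x : α⦄, Δ σ → x ∉ σ → r (insert x σ) = r σ →
      Δ (insert x σ) →
      ∀ τ : Finset α, τ ∩ σ = ∅ → Δ (τ ∪ σ) → x ∉ τ → Δ (insert x τ ∪ σ)) :
    IsSemimatroid Δ r :=
  { nonempty := ⟨∅, hΔ⟩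
    down_closed := hdown
    rank_le_card := fun σ _ => h_le_card σ
    rank_mono := fun _ _ _ _ h => h_mono h
    submodular := fun σ τ _ _ _ => h_submod σ τ
    union_mem := fun _ _ => Semimatroid.IsStrong.union_mem hStrong hdown h_mono
    exchange := fun _ _ hσ _ =>
      Semimatroid.IsPseudoIndependence.exists_insert_mem hPI h_mono h_submod hσ }

/-- Let `Δ` be a strong pseudo-independence complex over a matroid with rank
function `r`. Then `(S, Δ, r|_Δ)` is a semimatroid. Here `r` satisfies the matroid rank
axioms, `Δ` is a nonempty downward-closed complex; pseudo-independence means rank-increasing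
extensions of faces are faces, and strongness means that any rank-preserving extension
element `x` of a face `σ` with `σ ∪ {x} ∈ Δ` is a cone point of `lk_σ(Δ)`. -/
theorem strong_pseudo_independence_is_semimatroid {α : Type*} [DecidableEq α]
    (Δ : Finset α → Prop) (r : Finset α → ℕ)
    -- `Δ` is a nonempty simplicial complex
    (hΔ : Δ ∅)
    (hdown : ∀ ⦃σ τ : Finset α⦄, Δ σ → τ ⊆ σ → Δ τ)
    -- `r` is the rank function of a matroid
    (h_le_card : ∀ σ : Finset α, r σ ≤ σ.card)
    (h_mono : ∀ ⦃σ τ : Finset α⦄, σ ⊆ τ → r σ ≤ r τ)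
    (h_submod : ∀ σ τ : Finset α, r (σ ∪ τ) + r (σ ∩ τ) ≤ r σ + r τ)
    (h_step : ∀ (σ : Finset α) (x : α), r (insert x σ) ≤ r σ + 1)
    -- `Δ` is a pseudo-independence complex over the matroid
    (hPI : ∀ ⦃σ : Finset α⦄ ⦃x : α⦄, Δ σ → x ∉ σ → r σ < r (insert x σ) → Δ (insert x σ))
    -- `Δ` is strong: such an `x` is a cone point of `lk_σ(Δ)`
    (hStrong : ∀ ⦃σ : Finset α⦄ ⦃x : α⦄, Δ σ → x ∉ σ → r (insert x σ) = r σ →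
      Δ (insert x σ) →
      ∀ τ : Finset α, τ ∩ σ = ∅ → Δ (τ ∪ σ) → x ∉ τ → Δ (insert x τ ∪ σ)) :
    IsSemimatroid Δ r :=
  strong_pseudo_independence_is_semimatroid_general Δ r hΔ hdown h_le_card h_mono h_submod hPI
    hStrong
end

section
/- For a semimatroid 𝒞 with linear order on S, the face-count generating polynomial of the broken circuit complex satisfies Σ_{σ ∈ BC(𝒞)} q^{|σ|} = q^{r_𝒞} T_𝒞((q+1)/q, 0), where r_𝒞 is the rank of 𝒞. -/
/-- A circuit of a semimatroid: a dependent face all of whose proper subsets are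
independent. -/
def IsCircuit {α : Type*} (Δ : Finset (Finset α)) (r : Finset α → ℕ) (C : Finset α) : Prop :=
  C ∈ Δ ∧ r C < C.card ∧ ∀ X : Finset α, X ⊂ C → r X = X.card

/-- `σ` contains a broken circuit, i.e. a set `C \ {min C}` for some circuit `C`. -/
def HasBrokenCircuit {α : Type*} [LinearOrder α] (Δ : Finset (Finset α)) (r : Finset α → ℕ)
    (σ : Finset α) : Prop :=
  ∃ C : Finset α, IsCircuit Δ r C ∧ ∃ h : C.Nonempty, C.erase (C.min' h) ⊆ σ

/-- Membership in the broken circuit complex `BC(𝒞)`: a face containing no broken circuit. -/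
def InBC {α : Type*} [LinearOrder α] (Δ : Finset (Finset α)) (r : Finset α → ℕ)
    (σ : Finset α) : Prop :=
  σ ∈ Δ ∧ ¬ HasBrokenCircuit Δ r σ

open Classical in
/-- The broken circuit complex of a semimatroid, as a finite set of faces. -/
noncomputable def bcFinset {α : Type*} [LinearOrder α] (Δ : Finset (Finset α))
    (r : Finset α → ℕ) : Finset (Finset α) :=
  Δ.filter (fun σ => ¬ HasBrokenCircuit Δ r σ)

/-!
Call `e` active in a face `A` when `e` lies in the closure of the elements of `A` above it.
A face contains a broken circuit exactly when it has an active element: the least element of a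
circuit is active in any face containing the rest of the circuit, and an active element `e` of
an independent face closes up a circuit whose least element is `e`. Toggling the least active
element keeps the face in `Δ`, keeps its rank, changes its size by one and does not change which
elements up to it are active, so it is a sign-reversing involution for the weight
`(-1)^(|σ| - r σ) q^(r σ)` on the faces containing a broken circuit. The faces that remain are
independent, which gives `∑_{σ ∈ BC} q^|σ| = ∑_{σ ∈ Δ} (-1)^(|σ| - r σ) q^(r σ)`, and the right
side is `q^r_𝒞 T_𝒞((q+1)/q, 0)` expanded.
-/

open Finset

section Closure

variable {α : Type*} [DecidableEq α] {Δ : Finset (Finset α)} {r : Finset α → ℕ}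

def InClosure (Δ : Finset (Finset α)) (r : Finset α → ℕ) (e : α) (B : Finset α) : Prop :=
  insert e B ∈ Δ ∧ r (insert e B) = r B

namespace IsSemimatroid

variable (h : IsSemimatroid (· ∈ Δ) r)
include h

theorem rank_eq_card_of_subset {A X : Finset α} (hA : A ∈ Δ) (hind : r A = #A) (hXA : X ⊆ A) :
    r X = #X := by
  have hsub := h.submodular (h.down_closed hA hXA) (h.down_closed hA sdiff_subset)
    (by rwa [union_sdiff_of_subset hXA])
  rw [union_sdiff_of_subset hXA] at hsub
  have hX := h.rank_le_card (h.down_closed hA hXA)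
  have hrest := h.rank_le_card (h.down_closed hA (sdiff_subset (s := A) (t := X)))
  have hcard := card_sdiff_add_card_eq_card hXA
  omega

theorem exists_isCircuit_subset {A : Finset α} (hA : A ∈ Δ) (hdep : r A < #A) :
    ∃ C ⊆ A, IsCircuit Δ r C := by
  obtain ⟨C, hCmem, hCmin⟩ := Finset.exists_minimal
    (s := A.powerset.filter fun X => r X < #X) ⟨A, by simpa using hdep⟩
  rw [mem_filter, mem_powerset] at hCmem
  refine ⟨C, hCmem.1, h.down_closed hA hCmem.1, hCmem.2, fun X hXC => ?_⟩
  have hX := h.rank_le_card (h.down_closed hA (hXC.subset.trans hCmem.1))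
  by_contra hne
  exact hXC.not_subset (hCmin (by simpa using ⟨hXC.subset.trans hCmem.1, by omega⟩)
    hXC.subset)

theorem inClosure_erase_of_isCircuit {C : Finset α} (hC : IsCircuit Δ r C) {m : α} (hm : m ∈ C) :
    InClosure Δ r m (C.erase m) := by
  obtain ⟨hCΔ, hdep, hmin⟩ := hC
  have hind := hmin _ (erase_ssubset hm)
  have hmono := h.rank_mono (h.down_closed hCΔ (erase_subset m C)) hCΔ (erase_subset m C)
  have hcard := card_erase_add_one hm
  rw [InClosure, insert_erase hm]
  exact ⟨hCΔ, by omega⟩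

theorem inClosure_mono {e : α} {B D : Finset α} (he : InClosure Δ r e B) (hD : D ∈ Δ)
    (hBD : B ⊆ D) : InClosure Δ r e D := by
  by_cases heD : e ∈ D
  · rw [InClosure, insert_eq_of_mem heD]
    exact ⟨hD, rfl⟩
  obtain ⟨heB, hrank⟩ := he
  have hcap : insert e B ∩ D = B := by
    ext x
    have := @hBD x
    by_cases hx : x = e <;> simp_all
  have hcup : insert e B ∪ D = insert e D := by
    ext x
    have := @hBD x
    by_cases hx : x = e <;> simp_all
  have heD' : insert e D ∈ Δ := hcup ▸ h.union_mem heB hD (by rw [hcap, hrank])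
  have hsub := h.submodular heB hD (hcup ▸ heD')
  rw [hcup, hcap, hrank] at hsub
  exact ⟨heD', le_antisymm (by omega) (h.rank_mono hD heD' (subset_insert e D))⟩

theorem mem_rank_eq_of_inClosure {e : α} {Z W : Finset α} (he : InClosure Δ r e Z) (hZW : Z ⊆ W)
    (hW : W ⊆ insert e Z) : W ∈ Δ ∧ r W = r Z := by
  have hWΔ := h.down_closed he.1 hW
  have hZΔ := h.down_closed he.1 (subset_insert e Z)
  refine ⟨hWΔ, le_antisymm ?_ (h.rank_mono hZΔ hWΔ hZW)⟩
  exact he.2 ▸ h.rank_mono hWΔ he.1 hW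

theorem inClosure_of_subset_insert {e f : α} {X Y Z : Finset α} (he : InClosure Δ r e Z)
    (hf : InClosure Δ r f Y) (hY : Y ⊆ insert e Z) (hZX : Z ⊆ X) (hX : X ⊆ insert e Z) :
    InClosure Δ r f X := by
  obtain ⟨hfW, hrW⟩ := h.inClosure_mono hf he.1 hY
  obtain ⟨hXΔ, hrX⟩ := h.mem_rank_eq_of_inClosure he hZX hX
  have hfX : insert f X ∈ Δ := h.down_closed hfW (insert_subset_insert f hX)
  refine ⟨hfX, le_antisymm ?_ (h.rank_mono hXΔ hfX (subset_insert f X))⟩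
  calc r (insert f X) ≤ r (insert f (insert e Z)) := h.rank_mono hfX hfW (insert_subset_insert f hX)
    _ = r X := by rw [hrW, he.2, hrX]

end IsSemimatroid

end Closure

section Activity

variable {α : Type*} [LinearOrder α] {Δ : Finset (Finset α)} {r : Finset α → ℕ}

def IsActive (Δ : Finset (Finset α)) (r : Finset α → ℕ) (A : Finset α) (e : α) : Prop :=
  InClosure Δ r e (A.filter (e < ·))

def toggle (e : α) (A : Finset α) : Finset α := if e ∈ A then A.erase e else insert e A

theorem toggle_toggle (e : α) (A : Finset α) : toggle e (toggle e A) = A := by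
  by_cases he : e ∈ A <;> simp [toggle, he]

theorem filter_toggle (p : α → Prop) [DecidablePred p] (e : α) (A : Finset α) :
    (toggle e A).filter p = if p e then toggle e (A.filter p) else A.filter p := by
  by_cases he : e ∈ A <;> by_cases hp : p e <;> simp [toggle, he, hp, filter_insert, filter_erase]

theorem erase_subset_toggle (e : α) (A : Finset α) : A.erase e ⊆ toggle e A := by
  unfold toggle; split_ifs
  exacts [subset_rfl, (erase_subset e A).trans (subset_insert e A)]

theorem toggle_subset_insert_erase (e : α) (A : Finset α) : toggle e A ⊆ insert e (A.erase e) := by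
  unfold toggle; split_ifs
  exacts [subset_insert e _, insert_subset_insert e (erase_eq_of_notMem ‹_›).ge]

theorem card_toggle (e : α) (A : Finset α) :
    #A + 1 = #(toggle e A) ∨ #(toggle e A) + 1 = #A := by
  unfold toggle; split_ifs with he
  exacts [Or.inr (card_erase_add_one he), Or.inl (card_insert_of_notMem he).symm]

variable (h : IsSemimatroid (· ∈ Δ) r)
include h

theorem IsSemimatroid.hasBrokenCircuit_of_rank_lt_card {A : Finset α} (hA : A ∈ Δ)
    (hdep : r A < #A) : HasBrokenCircuit Δ r A := by
  obtain ⟨C, hCA, hC⟩ := h.exists_isCircuit_subset hA hdep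
  have hCne : C.Nonempty := nonempty_iff_ne_empty.2 fun hC0 => by simpa [hC0] using hC.2.1
  exact ⟨C, hC, hCne, (erase_subset _ _).trans hCA⟩

theorem IsSemimatroid.isActive_of_hasBrokenCircuit {A : Finset α} (hA : A ∈ Δ)
    (hbc : HasBrokenCircuit Δ r A) : ∃ e, IsActive Δ r A e := by
  obtain ⟨C, hC, hCne, hCA⟩ := hbc
  refine ⟨C.min' hCne, h.inClosure_mono (h.inClosure_erase_of_isCircuit hC (C.min'_mem hCne))
    (h.down_closed hA (filter_subset _ A)) fun x hx => mem_filter.2 ⟨hCA hx, ?_⟩⟩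
  exact lt_of_le_of_ne (C.min'_le x (mem_of_mem_erase hx)) (ne_of_mem_erase hx).symm

theorem IsSemimatroid.hasBrokenCircuit_of_isActive {A : Finset α} {e : α} (hA : A ∈ Δ)
    (he : IsActive Δ r A e) : HasBrokenCircuit Δ r A := by
  set B := A.filter (e < ·)
  have he : insert e B ∈ Δ ∧ r (insert e B) = r B := he
  by_contra hnbc
  have hind : r A = #A := le_antisymm (h.rank_le_card hA)
    (not_lt.1 fun hdep => hnbc (h.hasBrokenCircuit_of_rank_lt_card hA hdep))
  have heB : e ∉ B := by simp [B]
  have hrB : r B = #B := h.rank_eq_card_of_subset hA hind (filter_subset (e < ·) A)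
  have heA : e ∉ A := fun heA => by
    have := h.rank_eq_card_of_subset hA hind (insert_subset heA (filter_subset (e < ·) A))
    rw [he.2, card_insert_of_notMem heB] at this
    omega
  obtain ⟨C, hCB, hC⟩ := h.exists_isCircuit_subset he.1
    (by rw [he.2, card_insert_of_notMem heB]; omega)
  have heC : e ∈ C := by
    by_contra heC
    have := h.rank_eq_card_of_subset hA hind
      ((subset_insert_iff_of_notMem heC).1 hCB |>.trans (filter_subset (e < ·) A))
    exact absurd hC.2.1 (by omega)
  have hmin : C.min' ⟨e, heC⟩ = e := by
    refine le_antisymm (C.min'_le e heC) (C.le_min' _ e fun x hx => ?_)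
    rcases mem_insert.1 (hCB hx) with rfl | hxB
    exacts [le_rfl, (mem_filter.1 hxB).2.le]
  refine hnbc ⟨C, hC, ⟨e, heC⟩, ?_⟩
  rw [hmin, ← subset_insert_iff]
  exact hCB.trans (insert_subset_insert e (filter_subset (e < ·) A))

end Activity

section Involution

variable {α : Type*} [LinearOrder α] {Δ : Finset (Finset α)} {r : Finset α → ℕ}

theorem isActive_toggle_self {A : Finset α} {e : α} :
    IsActive Δ r (toggle e A) e ↔ IsActive Δ r A e := by
  simp only [IsActive, filter_toggle, lt_irrefl, if_false]

namespace IsSemimatroid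

variable (h : IsSemimatroid (· ∈ Δ) r)
include h

theorem inClosure_erase_of_isActive {A : Finset α} {e : α} (hA : A ∈ Δ)
    (he : IsActive Δ r A e) : InClosure Δ r e (A.erase e) :=
  h.inClosure_mono he (h.down_closed hA (erase_subset e A))
    fun _ hx => mem_erase.2 ⟨(mem_filter.1 hx).2.ne', (mem_filter.1 hx).1⟩

theorem toggle_mem_rank_eq {A : Finset α} {e : α} (hA : A ∈ Δ) (he : IsActive Δ r A e) :
    toggle e A ∈ Δ ∧ r (toggle e A) = r A := by
  have hZ := h.inClosure_erase_of_isActive hA he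
  obtain ⟨hT, hrT⟩ := h.mem_rank_eq_of_inClosure hZ (erase_subset_toggle e A)
    (toggle_subset_insert_erase e A)
  obtain ⟨-, hrA⟩ := h.mem_rank_eq_of_inClosure hZ (erase_subset e A) (insert_erase_subset e A)
  exact ⟨hT, hrT.trans hrA.symm⟩

theorem isActive_of_isActive_toggle {A : Finset α} {e f : α} (hA : A ∈ Δ)
    (he : IsActive Δ r A e) (hfe : f < e) (hf : IsActive Δ r (toggle e A) f) :
    IsActive Δ r A f := by
  have hX : A.filter (f < ·) ∈ Δ := h.down_closed hA (filter_subset _ A)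
  have heX : IsActive Δ r (A.filter (f < ·)) e := by
    rwa [IsActive, filter_filter, filter_congr fun _ _ => and_iff_right_of_imp hfe.trans]
  have hZ := h.inClosure_erase_of_isActive hX heX
  rw [IsActive, filter_toggle, if_pos hfe] at hf
  exact h.inClosure_of_subset_insert hZ hf (toggle_subset_insert_erase e _) (erase_subset e _)
    (insert_erase_subset e _)

theorem isActive_toggle_iff {A : Finset α} {e f : α} (hA : A ∈ Δ) (he : IsActive Δ r A e)
    (hfe : f ≤ e) : IsActive Δ r (toggle e A) f ↔ IsActive Δ r A f := by
  rcases hfe.lt_or_eq with hfe | rfl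
  · refine ⟨h.isActive_of_isActive_toggle hA he hfe, fun hf => ?_⟩
    refine h.isActive_of_isActive_toggle (h.toggle_mem_rank_eq hA he).1
      (isActive_toggle_self.2 he) hfe ?_
    rwa [toggle_toggle]
  · exact isActive_toggle_self

end IsSemimatroid

end Involution

section Whitney

theorem neg_one_pow_sub_add_neg_one_pow_sub {R : Type*} [Ring R] {k m n : ℕ} (hm : k ≤ m)
    (hn : k ≤ n) (hmn : m + 1 = n ∨ n + 1 = m) : (-1 : R) ^ (m - k) + (-1) ^ (n - k) = 0 := by
  rcases hmn with rfl | rfl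
  · rw [Nat.sub_add_comm hm, pow_succ, mul_neg_one, add_neg_cancel]
  · rw [Nat.sub_add_comm hn, pow_succ, mul_neg_one, neg_add_cancel]

variable {α : Type*} [LinearOrder α] {Δ : Finset (Finset α)} {r : Finset α → ℕ}

open Classical in
noncomputable def activeSet (Δ : Finset (Finset α)) (r : Finset α → ℕ) (A : Finset α) :
    Finset α :=
  (Δ.sup id).filter (IsActive Δ r A)

theorem mem_activeSet {A : Finset α} {e : α} : e ∈ activeSet Δ r A ↔ IsActive Δ r A e := by
  classical
  rw [activeSet, mem_filter, and_iff_right_iff_imp]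
  exact fun he => mem_sup.2 ⟨_, he.1, mem_insert_self e _⟩

noncomputable def toggleMinActive (Δ : Finset (Finset α)) (r : Finset α → ℕ) (A : Finset α) :
    Finset α :=
  if hne : (activeSet Δ r A).Nonempty then toggle ((activeSet Δ r A).min' hne) A else A

theorem card_toggleMinActive {A : Finset α} (hne : (activeSet Δ r A).Nonempty) :
    #A + 1 = #(toggleMinActive Δ r A) ∨ #(toggleMinActive Δ r A) + 1 = #A := by
  rw [toggleMinActive, dif_pos hne]
  exact card_toggle _ _

namespace IsSemimatroid

variable (h : IsSemimatroid (· ∈ Δ) r)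
include h

theorem activeSet_nonempty_iff {A : Finset α} (hA : A ∈ Δ) :
    (activeSet Δ r A).Nonempty ↔ HasBrokenCircuit Δ r A := by
  refine ⟨fun ⟨e, he⟩ => h.hasBrokenCircuit_of_isActive hA (mem_activeSet.1 he), fun hbc => ?_⟩
  obtain ⟨e, he⟩ := h.isActive_of_hasBrokenCircuit hA hbc
  exact ⟨e, mem_activeSet.2 he⟩

theorem toggleMinActive_spec {A : Finset α} (hA : A ∈ Δ) (hbc : HasBrokenCircuit Δ r A) :
    toggleMinActive Δ r A ∈ Δ ∧ r (toggleMinActive Δ r A) = r A ∧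
      HasBrokenCircuit Δ r (toggleMinActive Δ r A) ∧
      toggleMinActive Δ r (toggleMinActive Δ r A) = A := by
  have hne := (h.activeSet_nonempty_iff hA).2 hbc
  set e := (activeSet Δ r A).min' hne
  have he : IsActive Δ r A e := mem_activeSet.1 (min'_mem _ hne)
  have hT : toggleMinActive Δ r A = toggle e A := dif_pos hne
  obtain ⟨hTΔ, hrT⟩ := h.toggle_mem_rank_eq hA he
  have heT : e ∈ activeSet Δ r (toggle e A) := mem_activeSet.2 (isActive_toggle_self.2 he)
  have hne' : (activeSet Δ r (toggle e A)).Nonempty := ⟨e, heT⟩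
  -- Toggling `e` does not change which elements `f ≤ e` are active, so `e` stays the least one.
  have hmin : (activeSet Δ r (toggle e A)).min' hne' = e := by
    refine le_antisymm (min'_le _ _ heT) ?_
    refine (le_min'_iff _ _).2 fun f hf => not_lt.1 fun hfe => ?_
    have hfA := (h.isActive_toggle_iff hA he hfe.le).1 (mem_activeSet.1 hf)
    exact absurd (min'_le _ f (mem_activeSet.2 hfA)) (not_le.2 hfe)
  refine ⟨hT ▸ hTΔ, hT ▸ hrT, ?_, ?_⟩
  · exact hT ▸ (h.activeSet_nonempty_iff hTΔ).1 hne'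
  · rw [hT, toggleMinActive, dif_pos hne', hmin, toggle_toggle]

open Classical in
theorem sum_filter_hasBrokenCircuit_eq_zero {R : Type*} [CommRing R] (q : R) :
    ∑ σ ∈ Δ with HasBrokenCircuit Δ r σ, (-1) ^ (#σ - r σ) * q ^ r σ = 0 := by
  refine sum_involution (fun A _ => toggleMinActive Δ r A) (fun A hA => ?_) (fun A hA _ => ?_)
    (fun A hA => ?_) (fun A hA => ?_) <;>
  obtain ⟨hA, hbc⟩ := mem_filter.1 hA <;>
  obtain ⟨hTΔ, hrT, hTbc, hTT⟩ := h.toggleMinActive_spec hA hbc <;>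
  have hcard := card_toggleMinActive ((h.activeSet_nonempty_iff hA).2 hbc)
  · rw [hrT, ← add_mul, neg_one_pow_sub_add_neg_one_pow_sub (h.rank_le_card hA)
      (hrT ▸ h.rank_le_card hTΔ) hcard, zero_mul]
  · exact fun hfix => by rw [hfix] at hcard; omega
  · exact mem_filter.2 ⟨hTΔ, hTbc⟩
  · exact hTT

theorem sum_bcFinset_pow_card {R : Type*} [CommRing R] (q : R) :
    ∑ σ ∈ bcFinset Δ r, q ^ #σ = ∑ σ ∈ Δ, (-1) ^ (#σ - r σ) * q ^ r σ := by
  classical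
  rw [← sum_filter_add_sum_filter_not Δ (HasBrokenCircuit Δ r),
    h.sum_filter_hasBrokenCircuit_eq_zero, zero_add, bcFinset]
  refine sum_congr (filter_congr_decidable _ _ _) fun σ hσ => ?_
  rw [mem_filter] at hσ
  have hind : r σ = #σ := le_antisymm (h.rank_le_card hσ.1)
    (not_lt.1 fun hdep => hσ.2 (h.hasBrokenCircuit_of_rank_lt_card hσ.1 hdep))
  rw [hind, Nat.sub_self, pow_zero, one_mul]

end IsSemimatroid

end Whitney

theorem pow_rkOf_mul_tutte {α : Type*} (Δ : Finset (Finset α)) (r : Finset α → ℕ) {q : ℝ}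
    (hq : q ≠ 0) :
    q ^ rkOf Δ r * tutte Δ r ((q + 1) / q) 0 = ∑ σ ∈ Δ, (-1) ^ (#σ - r σ) * q ^ r σ := by
  have hx : (q + 1) / q - 1 = q⁻¹ := by field_simp; ring
  rw [tutte, mul_sum]
  refine sum_congr rfl fun σ hσ => ?_
  have hle : r σ ≤ rkOf Δ r := le_sup hσ
  have hrk : q ^ rkOf Δ r = q ^ r σ * q ^ (rkOf Δ r - r σ) := by
    rw [← pow_add, Nat.add_sub_cancel' hle]
  rw [hx, hrk, zero_sub, inv_pow]
  field_simp

/-- The face-count generating polynomial of the broken circuit complex of a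
semimatroid satisfies `Σ_{σ ∈ BC(𝒞)} q^{|σ|} = q^{r_𝒞} · T_𝒞((q+1)/q, 0)` for `q ≠ 0`. -/
theorem brokenCircuit_face_generating_polynomial {α : Type*} [LinearOrder α]
    (Δ : Finset (Finset α)) (r : Finset α → ℕ)
    (h : IsSemimatroid (· ∈ Δ) r) :
    ∀ q : ℝ, q ≠ 0 →
      ∑ σ ∈ bcFinset Δ r, q ^ σ.card = q ^ (rkOf Δ r) * tutte Δ r ((q + 1) / q) 0 := by
  intro q hq
  rw [h.sum_bcFinset_pow_card, pow_rkOf_mul_tutte Δ r hq]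
end
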